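/- arXiv:2403.15597 — 2 statements merged into one kernel-verified Lean document; each statement's English description precedes it below -/
import Mathlib

section
/- Let S=(a_n)_{n∈ℤ} be a bi-infinite sequence with entries in {1,2,3}. Then: (1) if (a_{-1},a_0)=(1,3) then λ₀(S)>j₀+10⁻¹; (2) if (a_{-1},a_0,a_1)=(2,3,2) then λ₀(S)>j₀+10⁻²; (3) if (a_{-1},a_0,a_1,a_2)=(3,3,2,3) then λ₀(S)>j₀+10⁻²; (4) if (a_{-2},…,a_2)=(2,3,3,2,2) or (a_{-2},…,a_2)=(3,3,3,2,2) then λ₀(S)>j₀+10⁻²; (5) if (a_{-2},…,a_3)=(3,3,3,2,1,1) then λ₀(S)>j₀+10⁻³; (6) if (a_{-3},…,a_4)=(1,2,3,3,2,1,1,2) then λ₀(S)>j₀+10⁻³; (7) if (a_{-5},…,a_5)=(1,1,1,2,3,3,2,1,1,1,1) then λ₀(S)>j₀+10⁻⁴. -/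
open Filter Set

/-- Convergents of a continued fraction: `cfConv n a` is the value of the finite
continued fraction `[a 0; a 1, …, a n]`. -/
noncomputable def cfConv : ℕ → (ℕ → ℕ) → ℝ
  | 0, a => (a 0 : ℝ)
  | n + 1, a => (a 0 : ℝ) + 1 / cfConv n (fun i => a (i + 1))

/-- The value `[a₀; a₁, a₂, …]` of an infinite continued fraction, as the limit
of its convergents (which exists since all entries are positive integers). -/
noncomputable def cfValue (a : ℕ → ℕ) : ℝ :=
  limUnder atTop (fun n => cfConv n a)

/-- `λ₀(S) = [a₀; a₁, a₂, …] + [0; a₋₁, a₋₂, …]` for a bi-infinite sequence `S`. -/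
noncomputable def lambda0 (S : ℤ → ℕ) : ℝ :=
  cfValue (fun n : ℕ => S (n : ℤ)) + 1 / cfValue (fun n : ℕ => S (-(n : ℤ) - 1))

/-- `λ_k(S) = λ₀` applied to the sequence shifted by `k`. -/
noncomputable def lambdaK (k : ℤ) (S : ℤ → ℕ) : ℝ :=
  lambda0 (fun n => S (n + k))

/-- The Markov value `m(S) = sup_{k ∈ ℤ} λ_k(S)`. -/
noncomputable def markovValue (S : ℤ → ℕ) : ℝ :=
  ⨆ k : ℤ, lambdaK k S

/-- The Lagrange value `ℓ(S) = limsup_{k → +∞} λ_k(S)`. -/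
noncomputable def lagrangeValue (S : ℤ → ℕ) : ℝ :=
  Filter.limsup (fun k : ℤ => lambdaK k S) atTop

/-- The Markov spectrum: Markov values of bi-infinite sequences of positive
integers whose Markov value is finite. -/
def MarkovSpectrum : Set ℝ :=
  {x | ∃ S : ℤ → ℕ, (∀ n, 0 < S n) ∧
    BddAbove (Set.range fun k : ℤ => lambdaK k S) ∧ markovValue S = x}

/-- The Lagrange spectrum: Lagrange values of bi-infinite sequences of positive
integers whose Lagrange value is finite. -/
def LagrangeSpectrum : Set ℝ :=
  {x | ∃ S : ℤ → ℕ, (∀ n, 0 < S n) ∧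
    Filter.IsBoundedUnder (· ≤ ·) atTop (fun k : ℤ => lambdaK k S) ∧ lagrangeValue S = x}

/-- The periodic sequence `…212332111…` of period 9 with
`(a₋₄,…,a₄) = (2,1,2,3,3,2,1,1,1)`. -/
def P1 : ℤ → ℕ := fun n =>
  match (n % 9).toNat with
  | 0 => 3 | 1 => 2 | 2 => 1 | 3 => 1 | 4 => 1 | 5 => 2 | 6 => 1 | 7 => 2 | _ => 3


open Topology

private def fwGood (a : ℕ → ℕ) : Prop := ∀ n, 1 ≤ a n ∧ a n ≤ 3

private lemma fwGood_shift {a : ℕ → ℕ} (h : fwGood a) : fwGood (fun i => a (i + 1)) :=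
  fun i => h (i + 1)

private lemma cfConv_zero (a : ℕ → ℕ) : cfConv 0 a = (a 0 : ℝ) := rfl

private lemma cfConv_succ (n : ℕ) (a : ℕ → ℕ) :
    cfConv (n + 1) a = (a 0 : ℝ) + 1 / cfConv n (fun i => a (i + 1)) := by
  simp only [cfConv]

private lemma one_le_cfConv : ∀ (n : ℕ) (a : ℕ → ℕ), fwGood a → 1 ≤ cfConv n a := by
  intro n
  induction n with
  | zero =>
    intro a ha
    rw [cfConv_zero]
    exact_mod_cast (ha 0).1
  | succ n ih =>
    intro a ha
    have h := ih _ (fwGood_shift ha)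
    have h0 : (1 : ℝ) ≤ (a 0 : ℝ) := by exact_mod_cast (ha 0).1
    rw [cfConv_succ]
    have hpos : 0 < cfConv n (fun i => a (i + 1)) := by linarith
    have : 0 ≤ 1 / cfConv n (fun i => a (i + 1)) := by positivity
    linarith

private lemma cfConv_bounds : ∀ (n : ℕ) (a : ℕ → ℕ), fwGood a →
    5/4 ≤ cfConv (n + 1) a ∧ cfConv (n + 1) a ≤ 4 := by
  intro n
  induction n with
  | zero =>
    intro a ha
    rw [cfConv_succ, cfConv_zero]
    have h1 : (1 : ℝ) ≤ (a 0 : ℝ) := by exact_mod_cast (ha 0).1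
    have h2 : (a 0 : ℝ) ≤ 3 := by exact_mod_cast (ha 0).2
    have h3 : (1 : ℝ) ≤ ((fun i => a (i+1)) 0 : ℝ) := by exact_mod_cast (ha 1).1
    have h4 : ((fun i => a (i+1)) 0 : ℝ) ≤ 3 := by exact_mod_cast (ha 1).2
    have h5 : (1/3 : ℝ) ≤ 1 / ((fun i => a (i+1)) 0 : ℝ) :=
      one_div_le_one_div_of_le (by linarith) h4
    have h6 : 1 / ((fun i => a (i+1)) 0 : ℝ) ≤ 1 :=
      by rw [div_le_one (by linarith)]; linarith
    constructor <;> linarith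
  | succ n ih =>
    intro a ha
    obtain ⟨h1, h2⟩ := ih _ (fwGood_shift ha)
    rw [cfConv_succ]
    have ha1 : (1 : ℝ) ≤ (a 0 : ℝ) := by exact_mod_cast (ha 0).1
    have ha2 : (a 0 : ℝ) ≤ 3 := by exact_mod_cast (ha 0).2
    have h5 : (1/4 : ℝ) ≤ 1 / cfConv (n+1) (fun i => a (i+1)) :=
      one_div_le_one_div_of_le (by linarith) h2
    have h6 : 1 / cfConv (n+1) (fun i => a (i+1)) ≤ 1 / (5/4) :=
      one_div_le_one_div_of_le (by norm_num) h1
    rw [show (1 / (5/4 : ℝ)) = 4/5 from by norm_num] at h6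
    constructor <;> linarith

private lemma cfConv_dist : ∀ (n : ℕ) (a : ℕ → ℕ), fwGood a →
    |cfConv (n + 1) a - cfConv n a| ≤ 3 * (4/5) ^ n := by
  intro n
  induction n with
  | zero =>
    intro a ha
    rw [cfConv_succ, cfConv_zero, cfConv_zero]
    have h1 : (1 : ℝ) ≤ ((fun i => a (i+1)) 0 : ℝ) := by exact_mod_cast (ha 1).1
    have key : (a 0 : ℝ) + 1 / ((fun i => a (i+1)) 0 : ℝ) - (a 0 : ℝ)
        = 1 / ((fun i => a (i+1)) 0 : ℝ) := by ring
    rw [key, abs_of_nonneg (by positivity), pow_zero]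
    have : 1 / ((fun i => a (i+1)) 0 : ℝ) ≤ 1 := by
      rw [div_le_one (by linarith)]; linarith
    linarith
  | succ n ih =>
    intro a ha
    rw [cfConv_succ (n+1) a, cfConv_succ n a]
    set u := cfConv (n + 1) (fun i => a (i + 1)) with hu
    set v := cfConv n (fun i => a (i + 1)) with hv
    obtain ⟨hu1, hu2⟩ := cfConv_bounds n _ (fwGood_shift ha)
    rw [← hu] at hu1 hu2
    have hv1 : 1 ≤ v := one_le_cfConv n _ (fwGood_shift ha)
    have hu0 : 0 < u := by linarith
    have hv0 : 0 < v := by linarith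
    have key : (a 0 : ℝ) + 1 / u - ((a 0 : ℝ) + 1 / v) = (v - u) / (u * v) := by
      field_simp
      ring
    rw [key, abs_div, abs_of_pos (mul_pos hu0 hv0), div_le_iff₀ (mul_pos hu0 hv0),
      abs_sub_comm]
    have ihh := ih _ (fwGood_shift ha)
    rw [← hu, ← hv] at ihh
    have huv : (5/4 : ℝ) ≤ u * v := by nlinarith
    have hp : (4/5 : ℝ) ^ (n + 1) = (4/5) ^ n * (4/5) := pow_succ _ _
    have hP : (0 : ℝ) < (4/5) ^ n := by positivity
    nlinarith [mul_nonneg (le_of_lt hP) (by linarith : (0:ℝ) ≤ u * v - 5/4)]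

private lemma cfValue_tendsto (a : ℕ → ℕ) (ha : fwGood a) :
    Tendsto (fun n => cfConv n a) atTop (𝓝 (cfValue a)) := by
  have hc : CauchySeq (fun n => cfConv n a) := by
    apply cauchySeq_of_le_geometric (4/5) 3 (by norm_num)
    intro n
    rw [Real.dist_eq, abs_sub_comm]
    exact cfConv_dist n a ha
  obtain ⟨L, hL⟩ := cauchySeq_tendsto_of_complete hc
  rwa [show cfValue a = L from hL.limUnder_eq]

private lemma cfValue_bounds (a : ℕ → ℕ) (ha : fwGood a) :
    5/4 ≤ cfValue a ∧ cfValue a ≤ 4 := by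
  have h1 : Tendsto (fun n => cfConv (n + 1) a) atTop (𝓝 (cfValue a)) :=
    (cfValue_tendsto a ha).comp (tendsto_add_atTop_nat 1)
  exact ⟨ge_of_tendsto' h1 fun n => (cfConv_bounds n a ha).1,
    le_of_tendsto' h1 fun n => (cfConv_bounds n a ha).2⟩

private lemma cfValue_rec (a : ℕ → ℕ) (ha : fwGood a) :
    cfValue a = (a 0 : ℝ) + 1 / cfValue (fun i => a (i + 1)) := by
  have hsh := fwGood_shift ha
  have h1 : Tendsto (fun n => cfConv (n + 1) a) atTop (𝓝 (cfValue a)) :=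
    (cfValue_tendsto a ha).comp (tendsto_add_atTop_nat 1)
  have hvb := cfValue_bounds _ hsh
  have hne : cfValue (fun i => a (i + 1)) ≠ 0 := by
    have := hvb.1; intro h; rw [h] at this; norm_num at this
  have h2 : Tendsto (fun n => (a 0 : ℝ) + 1 / cfConv n (fun i => a (i + 1))) atTop
      (𝓝 ((a 0 : ℝ) + 1 / cfValue (fun i => a (i + 1)))) :=
    tendsto_const_nhds.add (tendsto_const_nhds.div (cfValue_tendsto _ hsh) hne)
  have heq : (fun n => cfConv (n + 1) a)
      = fun n => (a 0 : ℝ) + 1 / cfConv n (fun i => a (i + 1)) := by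
    funext n; rw [cfConv_succ]
  rw [heq] at h1
  exact tendsto_nhds_unique h1 h2

private def FA (S : ℤ → ℕ) (k : ℤ) : ℕ → ℕ := fun n => S ((n : ℤ) + k)
private def FB (S : ℤ → ℕ) (k : ℤ) : ℕ → ℕ := fun n => S (-(n : ℤ) - 1 - k)

private lemma FA_shift (S : ℤ → ℕ) (k : ℤ) : (fun i => FA S k (i + 1)) = FA S (k + 1) := by
  funext i; simp only [FA]; congr 1; push_cast; ring

private lemma FB_shift (S : ℤ → ℕ) (k : ℤ) : (fun i => FB S k (i + 1)) = FB S (k + 1) := by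
  funext i; simp only [FB]; congr 1; push_cast; ring

private lemma fwGoodFA (S : ℤ → ℕ) (hS : ∀ n : ℤ, S n ∈ ({1, 2, 3} : Set ℕ)) (k : ℤ) :
    fwGood (FA S k) := by
  intro n
  have := hS ((n : ℤ) + k)
  simp only [Set.mem_insert_iff, Set.mem_singleton_iff] at this
  simp only [FA]
  omega

private lemma fwGoodFB (S : ℤ → ℕ) (hS : ∀ n : ℤ, S n ∈ ({1, 2, 3} : Set ℕ)) (k : ℤ) :
    fwGood (FB S k) := by
  intro n
  have := hS (-(n : ℤ) - 1 - k)
  simp only [Set.mem_insert_iff, Set.mem_singleton_iff] at this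
  simp only [FB]
  omega

private lemma cfValue_step (a : ℕ → ℕ) (ha : fwGood a) (v : ℕ) (hv : a 0 = v) {lo hi : ℝ}
    (hlo : 0 < lo) (h1 : lo ≤ cfValue (fun i => a (i + 1)))
    (h2 : cfValue (fun i => a (i + 1)) ≤ hi) :
    (v : ℝ) + 1 / hi ≤ cfValue a ∧ cfValue a ≤ (v : ℝ) + 1 / lo := by
  have hx : 0 < cfValue (fun i => a (i + 1)) := lt_of_lt_of_le hlo h1
  have e := cfValue_rec a ha
  rw [hv] at e
  constructor
  · have := one_div_le_one_div_of_le hx h2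
    rw [e]; linarith
  · have := one_div_le_one_div_of_le hlo h1
    rw [e]; linarith

private lemma stepA (S : ℤ → ℕ) (hS : ∀ n : ℤ, S n ∈ ({1, 2, 3} : Set ℕ)) (k k₁ : ℤ)
    (hk : k + 1 = k₁) (v : ℕ) (hv : S k = v) {lo hi : ℝ} (hlo : 0 < lo)
    (h1 : lo ≤ cfValue (FA S k₁)) (h2 : cfValue (FA S k₁) ≤ hi) :
    (v : ℝ) + 1 / hi ≤ cfValue (FA S k) ∧ cfValue (FA S k) ≤ (v : ℝ) + 1 / lo := by
  subst hk
  rw [← FA_shift S k] at h1 h2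
  exact cfValue_step (FA S k) (fwGoodFA S hS k) v (by simpa [FA] using hv) hlo h1 h2

private lemma stepB (S : ℤ → ℕ) (hS : ∀ n : ℤ, S n ∈ ({1, 2, 3} : Set ℕ)) (k k₁ : ℤ)
    (hk : k + 1 = k₁) (v : ℕ) (hv : S (-1 - k) = v) {lo hi : ℝ} (hlo : 0 < lo)
    (h1 : lo ≤ cfValue (FB S k₁)) (h2 : cfValue (FB S k₁) ≤ hi) :
    (v : ℝ) + 1 / hi ≤ cfValue (FB S k) ∧ cfValue (FB S k) ≤ (v : ℝ) + 1 / lo := by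
  subst hk
  rw [← FB_shift S k] at h1 h2
  exact cfValue_step (FB S k) (fwGoodFB S hS k) v (by simpa [FB] using hv) hlo h1 h2

private lemma baseA (S : ℤ → ℕ) (hS : ∀ n : ℤ, S n ∈ ({1, 2, 3} : Set ℕ)) (k : ℤ) :
    5/4 ≤ cfValue (FA S k) ∧ cfValue (FA S k) ≤ 4 :=
  cfValue_bounds _ (fwGoodFA S hS k)

private lemma baseB (S : ℤ → ℕ) (hS : ∀ n : ℤ, S n ∈ ({1, 2, 3} : Set ℕ)) (k : ℤ) :
    5/4 ≤ cfValue (FB S k) ∧ cfValue (FB S k) ≤ 4 :=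
  cfValue_bounds _ (fwGoodFB S hS k)

private lemma lambda0_lb (S : ℤ → ℕ) {loA hiB : ℝ}
    (h1 : loA ≤ cfValue (FA S 0)) (h2 : cfValue (FB S 0) ≤ hiB)
    (h3 : 0 < cfValue (FB S 0)) : loA + 1 / hiB ≤ lambda0 S := by
  have e1 : (fun n : ℕ => S (n : ℤ)) = FA S 0 := by
    funext n; simp [FA]
  have e2 : (fun n : ℕ => S (-(n : ℤ) - 1)) = FB S 0 := by
    funext n; simp [FB]
  unfold lambda0
  rw [e1, e2]
  have := one_div_le_one_div_of_le h3 h2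
  linarith

private lemma lambda0_ub (S : ℤ → ℕ) {hiA loB : ℝ}
    (h1 : cfValue (FA S 0) ≤ hiA) (h2 : loB ≤ cfValue (FB S 0))
    (h3 : 0 < loB) : lambda0 S ≤ hiA + 1 / loB := by
  have e1 : (fun n : ℕ => S (n : ℤ)) = FA S 0 := by
    funext n; simp [FA]
  have e2 : (fun n : ℕ => S (-(n : ℤ) - 1)) = FB S 0 := by
    funext n; simp [FB]
  unfold lambda0
  rw [e1, e2]
  have := one_div_le_one_div_of_le h3 h2
  linarith

private lemma P1_mem (n : ℤ) : P1 n ∈ ({1, 2, 3} : Set ℕ) := by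
  simp only [P1, Set.mem_insert_iff, Set.mem_singleton_iff]
  split <;> omega

private lemma P1_ub : lambda0 P1 ≤ 3.676705 := by
  obtain ⟨la9, ha9⟩ := baseA P1 P1_mem 9
  obtain ⟨la8, ha8⟩ := stepA P1 P1_mem 8 9 (by norm_num) 3 (by decide) (by positivity) la9 ha9
  obtain ⟨la7, ha7⟩ := stepA P1 P1_mem 7 8 (by norm_num) 2 (by decide) (by positivity) la8 ha8
  obtain ⟨la6, ha6⟩ := stepA P1 P1_mem 6 7 (by norm_num) 1 (by decide) (by positivity) la7 ha7
  obtain ⟨la5, ha5⟩ := stepA P1 P1_mem 5 6 (by norm_num) 2 (by decide) (by positivity) la6 ha6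
  obtain ⟨la4, ha4⟩ := stepA P1 P1_mem 4 5 (by norm_num) 1 (by decide) (by positivity) la5 ha5
  obtain ⟨la3, ha3⟩ := stepA P1 P1_mem 3 4 (by norm_num) 1 (by decide) (by positivity) la4 ha4
  obtain ⟨la2, ha2⟩ := stepA P1 P1_mem 2 3 (by norm_num) 1 (by decide) (by positivity) la3 ha3
  obtain ⟨la1, ha1⟩ := stepA P1 P1_mem 1 2 (by norm_num) 2 (by decide) (by positivity) la2 ha2
  obtain ⟨la0, ha0⟩ := stepA P1 P1_mem 0 1 (by norm_num) 3 (by decide) (by positivity) la1 ha1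
  obtain ⟨lb9, hb9⟩ := baseB P1 P1_mem 9
  obtain ⟨lb8, hb8⟩ := stepB P1 P1_mem 8 9 (by norm_num) 3 (by decide) (by positivity) lb9 hb9
  obtain ⟨lb7, hb7⟩ := stepB P1 P1_mem 7 8 (by norm_num) 2 (by decide) (by positivity) lb8 hb8
  obtain ⟨lb6, hb6⟩ := stepB P1 P1_mem 6 7 (by norm_num) 1 (by decide) (by positivity) lb7 hb7
  obtain ⟨lb5, hb5⟩ := stepB P1 P1_mem 5 6 (by norm_num) 1 (by decide) (by positivity) lb6 hb6
  obtain ⟨lb4, hb4⟩ := stepB P1 P1_mem 4 5 (by norm_num) 1 (by decide) (by positivity) lb5 hb5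
  obtain ⟨lb3, hb3⟩ := stepB P1 P1_mem 3 4 (by norm_num) 2 (by decide) (by positivity) lb4 hb4
  obtain ⟨lb2, hb2⟩ := stepB P1 P1_mem 2 3 (by norm_num) 1 (by decide) (by positivity) lb3 hb3
  obtain ⟨lb1, hb1⟩ := stepB P1 P1_mem 1 2 (by norm_num) 2 (by decide) (by positivity) lb2 hb2
  obtain ⟨lb0, hb0⟩ := stepB P1 P1_mem 0 1 (by norm_num) 3 (by decide) (by positivity) lb1 hb1
  have h := lambda0_ub P1 ha0 lb0 (by positivity)
  refine le_trans h (by norm_num)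

/-- Forbidden words I for the first region (`j₀ = λ₀(P₁)`). -/
theorem forbidden_words_I (S : ℤ → ℕ) (hS : ∀ n : ℤ, S n ∈ ({1, 2, 3} : Set ℕ)) :
    ((S (-1) = 1 ∧ S 0 = 3) → lambda0 S > lambda0 P1 + 1 / 10 ^ 1) ∧
    ((S (-1) = 2 ∧ S 0 = 3 ∧ S 1 = 2) → lambda0 S > lambda0 P1 + 1 / 10 ^ 2) ∧
    ((S (-1) = 3 ∧ S 0 = 3 ∧ S 1 = 2 ∧ S 2 = 3) → lambda0 S > lambda0 P1 + 1 / 10 ^ 2) ∧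
    (((S (-2) = 2 ∧ S (-1) = 3 ∧ S 0 = 3 ∧ S 1 = 2 ∧ S 2 = 2) ∨
        (S (-2) = 3 ∧ S (-1) = 3 ∧ S 0 = 3 ∧ S 1 = 2 ∧ S 2 = 2)) →
      lambda0 S > lambda0 P1 + 1 / 10 ^ 2) ∧
    ((S (-2) = 3 ∧ S (-1) = 3 ∧ S 0 = 3 ∧ S 1 = 2 ∧ S 2 = 1 ∧ S 3 = 1) →
      lambda0 S > lambda0 P1 + 1 / 10 ^ 3) ∧
    ((S (-3) = 1 ∧ S (-2) = 2 ∧ S (-1) = 3 ∧ S 0 = 3 ∧ S 1 = 2 ∧ S 2 = 1 ∧ S 3 = 1 ∧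
        S 4 = 2) →
      lambda0 S > lambda0 P1 + 1 / 10 ^ 3) ∧
    ((S (-5) = 1 ∧ S (-4) = 1 ∧ S (-3) = 1 ∧ S (-2) = 2 ∧ S (-1) = 3 ∧ S 0 = 3 ∧
        S 1 = 2 ∧ S 2 = 1 ∧ S 3 = 1 ∧ S 4 = 1 ∧ S 5 = 1) →
      lambda0 S > lambda0 P1 + 1 / 10 ^ 4) := by
  
  refine ⟨?_, ?_, ?_, ?_, ?_, ?_, ?_⟩
  · rintro ⟨c1, c2⟩
    obtain ⟨la1, ha1⟩ := baseA S hS 1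
    obtain ⟨la0, ha0⟩ := stepA S hS 0 1 (by norm_num) 3 (c2) (by positivity) la1 ha1
    obtain ⟨lb1, hb1⟩ := baseB S hS 1
    obtain ⟨lb0, hb0⟩ := stepB S hS 0 1 (by norm_num) 1 (by norm_num [c1]) (by positivity) lb1 hb1
    have hlam := lambda0_lb S la0 hb0 (lt_of_lt_of_le (by positivity) lb0)
    refine lt_of_lt_of_le ?_ hlam
    refine lt_of_le_of_lt (show lambda0 P1 + 1/10^1 ≤ 3.676705 + 1/10^1 from by linarith [P1_ub]) ?_
    norm_num
  · rintro ⟨c1, c2, c3⟩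
    obtain ⟨la2, ha2⟩ := baseA S hS 2
    obtain ⟨la1, ha1⟩ := stepA S hS 1 2 (by norm_num) 2 (c3) (by positivity) la2 ha2
    obtain ⟨la0, ha0⟩ := stepA S hS 0 1 (by norm_num) 3 (c2) (by positivity) la1 ha1
    obtain ⟨lb1, hb1⟩ := baseB S hS 1
    obtain ⟨lb0, hb0⟩ := stepB S hS 0 1 (by norm_num) 2 (by norm_num [c1]) (by positivity) lb1 hb1
    have hlam := lambda0_lb S la0 hb0 (lt_of_lt_of_le (by positivity) lb0)
    refine lt_of_lt_of_le ?_ hlam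
    refine lt_of_le_of_lt (show lambda0 P1 + 1/10^2 ≤ 3.676705 + 1/10^2 from by linarith [P1_ub]) ?_
    norm_num
  · rintro ⟨c1, c2, c3, c4⟩
    obtain ⟨la3, ha3⟩ := baseA S hS 3
    obtain ⟨la2, ha2⟩ := stepA S hS 2 3 (by norm_num) 3 (c4) (by positivity) la3 ha3
    obtain ⟨la1, ha1⟩ := stepA S hS 1 2 (by norm_num) 2 (c3) (by positivity) la2 ha2
    obtain ⟨la0, ha0⟩ := stepA S hS 0 1 (by norm_num) 3 (c2) (by positivity) la1 ha1
    obtain ⟨lb1, hb1⟩ := baseB S hS 1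
    obtain ⟨lb0, hb0⟩ := stepB S hS 0 1 (by norm_num) 3 (by norm_num [c1]) (by positivity) lb1 hb1
    have hlam := lambda0_lb S la0 hb0 (lt_of_lt_of_le (by positivity) lb0)
    refine lt_of_lt_of_le ?_ hlam
    refine lt_of_le_of_lt (show lambda0 P1 + 1/10^2 ≤ 3.676705 + 1/10^2 from by linarith [P1_ub]) ?_
    norm_num
  · rintro (⟨c1, c2, c3, c4, c5⟩ | ⟨c1, c2, c3, c4, c5⟩)
    · obtain ⟨la3, ha3⟩ := baseA S hS 3
      obtain ⟨la2, ha2⟩ := stepA S hS 2 3 (by norm_num) 2 (c5) (by positivity) la3 ha3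
      obtain ⟨la1, ha1⟩ := stepA S hS 1 2 (by norm_num) 2 (c4) (by positivity) la2 ha2
      obtain ⟨la0, ha0⟩ := stepA S hS 0 1 (by norm_num) 3 (c3) (by positivity) la1 ha1
      obtain ⟨lb2, hb2⟩ := baseB S hS 2
      obtain ⟨lb1, hb1⟩ := stepB S hS 1 2 (by norm_num) 2 (by norm_num [c1]) (by positivity) lb2 hb2
      obtain ⟨lb0, hb0⟩ := stepB S hS 0 1 (by norm_num) 3 (by norm_num [c2]) (by positivity) lb1 hb1
      have hlam := lambda0_lb S la0 hb0 (lt_of_lt_of_le (by positivity) lb0)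
      refine lt_of_lt_of_le ?_ hlam
      refine lt_of_le_of_lt (show lambda0 P1 + 1/10^2 ≤ 3.676705 + 1/10^2 from by linarith [P1_ub]) ?_
      norm_num
    · obtain ⟨la3, ha3⟩ := baseA S hS 3
      obtain ⟨la2, ha2⟩ := stepA S hS 2 3 (by norm_num) 2 (c5) (by positivity) la3 ha3
      obtain ⟨la1, ha1⟩ := stepA S hS 1 2 (by norm_num) 2 (c4) (by positivity) la2 ha2
      obtain ⟨la0, ha0⟩ := stepA S hS 0 1 (by norm_num) 3 (c3) (by positivity) la1 ha1
      obtain ⟨lb2, hb2⟩ := baseB S hS 2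
      obtain ⟨lb1, hb1⟩ := stepB S hS 1 2 (by norm_num) 3 (by norm_num [c1]) (by positivity) lb2 hb2
      obtain ⟨lb0, hb0⟩ := stepB S hS 0 1 (by norm_num) 3 (by norm_num [c2]) (by positivity) lb1 hb1
      have hlam := lambda0_lb S la0 hb0 (lt_of_lt_of_le (by positivity) lb0)
      refine lt_of_lt_of_le ?_ hlam
      refine lt_of_le_of_lt (show lambda0 P1 + 1/10^2 ≤ 3.676705 + 1/10^2 from by linarith [P1_ub]) ?_
      norm_num
  · rintro ⟨c1, c2, c3, c4, c5, c6⟩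
    obtain ⟨la4, ha4⟩ := baseA S hS 4
    obtain ⟨la3, ha3⟩ := stepA S hS 3 4 (by norm_num) 1 (c6) (by positivity) la4 ha4
    obtain ⟨la2, ha2⟩ := stepA S hS 2 3 (by norm_num) 1 (c5) (by positivity) la3 ha3
    obtain ⟨la1, ha1⟩ := stepA S hS 1 2 (by norm_num) 2 (c4) (by positivity) la2 ha2
    obtain ⟨la0, ha0⟩ := stepA S hS 0 1 (by norm_num) 3 (c3) (by positivity) la1 ha1
    obtain ⟨lb2, hb2⟩ := baseB S hS 2
    obtain ⟨lb1, hb1⟩ := stepB S hS 1 2 (by norm_num) 3 (by norm_num [c1]) (by positivity) lb2 hb2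
    obtain ⟨lb0, hb0⟩ := stepB S hS 0 1 (by norm_num) 3 (by norm_num [c2]) (by positivity) lb1 hb1
    have hlam := lambda0_lb S la0 hb0 (lt_of_lt_of_le (by positivity) lb0)
    refine lt_of_lt_of_le ?_ hlam
    refine lt_of_le_of_lt (show lambda0 P1 + 1/10^3 ≤ 3.676705 + 1/10^3 from by linarith [P1_ub]) ?_
    norm_num
  · rintro ⟨c1, c2, c3, c4, c5, c6, c7, c8⟩
    obtain ⟨la5, ha5⟩ := baseA S hS 5
    obtain ⟨la4, ha4⟩ := stepA S hS 4 5 (by norm_num) 2 (c8) (by positivity) la5 ha5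
    obtain ⟨la3, ha3⟩ := stepA S hS 3 4 (by norm_num) 1 (c7) (by positivity) la4 ha4
    obtain ⟨la2, ha2⟩ := stepA S hS 2 3 (by norm_num) 1 (c6) (by positivity) la3 ha3
    obtain ⟨la1, ha1⟩ := stepA S hS 1 2 (by norm_num) 2 (c5) (by positivity) la2 ha2
    obtain ⟨la0, ha0⟩ := stepA S hS 0 1 (by norm_num) 3 (c4) (by positivity) la1 ha1
    obtain ⟨lb3, hb3⟩ := baseB S hS 3
    obtain ⟨lb2, hb2⟩ := stepB S hS 2 3 (by norm_num) 1 (by norm_num [c1]) (by positivity) lb3 hb3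
    obtain ⟨lb1, hb1⟩ := stepB S hS 1 2 (by norm_num) 2 (by norm_num [c2]) (by positivity) lb2 hb2
    obtain ⟨lb0, hb0⟩ := stepB S hS 0 1 (by norm_num) 3 (by norm_num [c3]) (by positivity) lb1 hb1
    have hlam := lambda0_lb S la0 hb0 (lt_of_lt_of_le (by positivity) lb0)
    refine lt_of_lt_of_le ?_ hlam
    refine lt_of_le_of_lt (show lambda0 P1 + 1/10^3 ≤ 3.676705 + 1/10^3 from by linarith [P1_ub]) ?_
    norm_num
  · rintro ⟨c1, c2, c3, c4, c5, c6, c7, c8, c9, c10, c11⟩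
    obtain ⟨la6, ha6⟩ := baseA S hS 6
    obtain ⟨la5, ha5⟩ := stepA S hS 5 6 (by norm_num) 1 (c11) (by positivity) la6 ha6
    obtain ⟨la4, ha4⟩ := stepA S hS 4 5 (by norm_num) 1 (c10) (by positivity) la5 ha5
    obtain ⟨la3, ha3⟩ := stepA S hS 3 4 (by norm_num) 1 (c9) (by positivity) la4 ha4
    obtain ⟨la2, ha2⟩ := stepA S hS 2 3 (by norm_num) 1 (c8) (by positivity) la3 ha3
    obtain ⟨la1, ha1⟩ := stepA S hS 1 2 (by norm_num) 2 (c7) (by positivity) la2 ha2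
    obtain ⟨la0, ha0⟩ := stepA S hS 0 1 (by norm_num) 3 (c6) (by positivity) la1 ha1
    obtain ⟨lb5, hb5⟩ := baseB S hS 5
    obtain ⟨lb4, hb4⟩ := stepB S hS 4 5 (by norm_num) 1 (by norm_num [c1]) (by positivity) lb5 hb5
    obtain ⟨lb3, hb3⟩ := stepB S hS 3 4 (by norm_num) 1 (by norm_num [c2]) (by positivity) lb4 hb4
    obtain ⟨lb2, hb2⟩ := stepB S hS 2 3 (by norm_num) 1 (by norm_num [c3]) (by positivity) lb3 hb3
    obtain ⟨lb1, hb1⟩ := stepB S hS 1 2 (by norm_num) 2 (by norm_num [c4]) (by positivity) lb2 hb2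
    obtain ⟨lb0, hb0⟩ := stepB S hS 0 1 (by norm_num) 3 (by norm_num [c5]) (by positivity) lb1 hb1
    have hlam := lambda0_lb S la0 hb0 (lt_of_lt_of_le (by positivity) lb0)
    refine lt_of_lt_of_le ?_ hlam
    refine lt_of_le_of_lt (show lambda0 P1 + 1/10^4 ≤ 3.676705 + 1/10^4 from by linarith [P1_ub]) ?_
    norm_num
end

section
/- If S=(a_n)_{n∈ℤ} is a bi-infinite sequence with entries in {1,2,3} such that m(S) ≤ j₀ + 10⁻⁴, then S contains none of the words 322, 223, 323 as a subword; that is, there is no n ∈ ℤ with (a_n,a_{n+1},a_{n+2}) equal to (3,2,2), (2,2,3) or (3,2,3). -/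
open Filter Set

open Topology

/-!
Write `λ_k = a_k + [0; a_{k+1}, …] + [0; a_{k-1}, …]`. Truncating both continued fractions of
`P₁` after three letters gives `j₀ < 3.6899`, so every `λ_k(S)` is below `3.69`. On the other
hand, a word `3 2 c` with `c ≥ 2` at position `n` makes `λ_n` or `λ_{n-1}` at least
`3 + 9/22 + 9/31 > 3.6994`, whatever letters precede it. The word `223` is `322` read backwards,
and reversing the sequence only permutes the values `λ_k`.
-/

section Convergents

variable {a : ℕ → ℕ}

theorem cfConv_mem_Icc (n : ℕ) (ha : ∀ i, a i ∈ Icc 1 3) :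
    cfConv n a ∈ Icc (1 : ℝ) 4 := by
  induction n generalizing a with
  | zero =>
    have := ha 0
    simp only [cfConv, mem_Icc] at this ⊢
    constructor <;> norm_cast <;> omega
  | succ n ih =>
    obtain ⟨h1, -⟩ := ih fun i => ha (i + 1)
    have h0 : (1 : ℝ) ≤ a 0 ∧ (a 0 : ℝ) ≤ 3 := by exact_mod_cast ha 0
    have hinv : 1 / cfConv n (fun i => a (i + 1)) ≤ 1 := by
      rw [div_le_one (by linarith)]; exact h1
    have : 0 ≤ 1 / cfConv n (fun i => a (i + 1)) := by positivity
    simp only [cfConv, mem_Icc]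
    constructor <;> linarith

-- From the second convergent on, the convergents are at least `5/4`, so
-- `|1/x - 1/y| = |x - y| / (x y) ≤ (4/5) |x - y|`.
theorem abs_cfConv_succ_sub_le (n : ℕ) (ha : ∀ i, a i ∈ Icc 1 3) :
    |cfConv (n + 1) a - cfConv n a| ≤ (4 / 5 : ℝ) ^ n := by
  induction n generalizing a with
  | zero =>
    have h1 : (1 : ℝ) ≤ a 1 := by exact_mod_cast (ha 1).1
    have : 1 / (a 1 : ℝ) ≤ 1 := by rw [div_le_one (by linarith)]; exact h1
    simp only [cfConv, add_sub_cancel_left, pow_zero]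
    rw [abs_of_pos (by positivity)]
    exact this
  | succ n ih =>
    set x := cfConv (n + 1) (fun i => a (i + 1))
    set y := cfConv n (fun i => a (i + 1))
    have hy : 1 ≤ y := (cfConv_mem_Icc n fun i => ha (i + 1)).1
    have hx : 5 / 4 ≤ x := by
      have h1 : (1 : ℝ) ≤ a 1 := by exact_mod_cast (ha 1).1
      obtain ⟨h1', h4⟩ := cfConv_mem_Icc n fun i => ha (i + 2)
      have : 1 / 4 ≤ 1 / cfConv n (fun i => a (i + 2)) :=
        one_div_le_one_div_of_le (by linarith) h4
      simp only [x, cfConv]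
      linarith
    have hdiff : cfConv (n + 2) a - cfConv (n + 1) a = (y - x) / (x * y) := by
      change (a 0 + 1 / x) - (a 0 + 1 / y) = (y - x) / (x * y)
      field_simp
      ring
    rw [hdiff, abs_div, abs_of_pos (mul_pos (by linarith) (by linarith) : 0 < x * y), abs_sub_comm]
    calc |x - y| / (x * y) ≤ (4 / 5 : ℝ) ^ n / (5 / 4) := by
          gcongr
          · exact ih fun i => ha (i + 1)
          · nlinarith
      _ = (4 / 5) ^ (n + 1) := by ring

theorem tendsto_cfConv (ha : ∀ i, a i ∈ Icc 1 3) :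
    Tendsto (fun n => cfConv n a) atTop (𝓝 (cfValue a)) := by
  have : CauchySeq fun n => cfConv n a :=
    cauchySeq_of_le_geometric (4 / 5) 1 (by norm_num) fun n => by
      rw [Real.dist_eq, abs_sub_comm, one_mul]
      exact abs_cfConv_succ_sub_le n ha
  exact this.tendsto_limUnder

theorem cfValue_mem_Icc (ha : ∀ i, a i ∈ Icc 1 3) : cfValue a ∈ Icc (1 : ℝ) 4 :=
  isClosed_Icc.mem_of_tendsto (tendsto_cfConv ha) (.of_forall fun n => cfConv_mem_Icc n ha)

theorem cfValue_eq_add_one_div (ha : ∀ i, a i ∈ Icc 1 3) :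
    cfValue a = a 0 + 1 / cfValue (fun i => a (i + 1)) := by
  have htail := tendsto_cfConv fun i => ha (i + 1)
  have hne : cfValue (fun i => a (i + 1)) ≠ 0 :=
    (one_pos.trans_le (cfValue_mem_Icc fun i => ha (i + 1)).1).ne'
  refine tendsto_nhds_unique ((tendsto_cfConv ha).comp (tendsto_add_atTop_nat 1)) ?_
  exact tendsto_const_nhds.add (tendsto_const_nhds.div htail hne)

end Convergents

noncomputable def cfForward (S : ℤ → ℕ) (k : ℤ) : ℝ :=
  cfValue fun m : ℕ => S (m + k)

noncomputable def cfBackward (S : ℤ → ℕ) (k : ℤ) : ℝ :=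
  cfValue fun m : ℕ => S (k - m)

theorem lambdaK_eq_cfForward_add (S : ℤ → ℕ) (k : ℤ) :
    lambdaK k S = cfForward S k + 1 / cfBackward S (k - 1) := by
  simp only [lambdaK, lambda0, cfForward, cfBackward]
  congr 3
  funext m
  ring_nf

theorem cfForward_neg (S : ℤ → ℕ) (k : ℤ) :
    cfForward (fun n => S (-n)) k = cfBackward S (-k) := by
  simp only [cfForward, cfBackward]
  congr 1
  funext m
  ring_nf

theorem cfBackward_neg (S : ℤ → ℕ) (k : ℤ) :
    cfBackward (fun n => S (-n)) k = cfForward S (-k) := by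
  simp only [cfForward, cfBackward]
  congr 1
  funext m
  ring_nf

section Digits

variable {S : ℤ → ℕ}

theorem cfForward_mem_Icc (hS : ∀ n, S n ∈ Icc 1 3) (k : ℤ) :
    cfForward S k ∈ Icc (1 : ℝ) 4 :=
  cfValue_mem_Icc fun _ => hS _

theorem cfBackward_mem_Icc (hS : ∀ n, S n ∈ Icc 1 3) (k : ℤ) :
    cfBackward S k ∈ Icc (1 : ℝ) 4 :=
  cfValue_mem_Icc fun _ => hS _

theorem cfForward_eq (hS : ∀ n, S n ∈ Icc 1 3) (k : ℤ) :
    cfForward S k = S k + 1 / cfForward S (k + 1) := by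
  rw [cfForward, cfValue_eq_add_one_div fun _ => hS _, cfForward]
  simp only [Nat.cast_zero, zero_add, Nat.cast_add, Nat.cast_one]
  congr 3
  funext m
  ring_nf

theorem cfBackward_eq (hS : ∀ n, S n ∈ Icc 1 3) (k : ℤ) :
    cfBackward S k = S k + 1 / cfBackward S (k - 1) := by
  rw [cfBackward, cfValue_eq_add_one_div fun _ => hS _, cfBackward]
  simp only [Nat.cast_zero, sub_zero, Nat.cast_add, Nat.cast_one]
  congr 3
  funext m
  ring_nf

-- The neighbouring index `j` may be given in any form that `omega` identifies with `k ± 1`.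
theorem cfForward_le_of_le (hS : ∀ n, S n ∈ Icc 1 3) {k j : ℤ} {d : ℕ} {l b : ℝ}
    (hd : S k ≤ d) (hl : 0 < l) (h : l ≤ cfForward S j) (hb : d + 1 / l ≤ b)
    (hj : j = k + 1 := by omega) : cfForward S k ≤ b := by
  subst hj
  rw [cfForward_eq hS]
  calc (S k : ℝ) + 1 / cfForward S (k + 1) ≤ d + 1 / l := by gcongr
    _ ≤ b := hb

theorem le_cfForward_of_le (hS : ∀ n, S n ∈ Icc 1 3) {k j : ℤ} {d : ℕ} {u b : ℝ}
    (hd : d ≤ S k) (h : cfForward S j ≤ u) (hb : b ≤ d + 1 / u)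
    (hj : j = k + 1 := by omega) : b ≤ cfForward S k := by
  subst hj
  have := (cfForward_mem_Icc hS (k + 1)).1
  rw [cfForward_eq hS]
  calc b ≤ d + 1 / u := hb
    _ ≤ S k + 1 / cfForward S (k + 1) := by gcongr

theorem cfBackward_le_of_le (hS : ∀ n, S n ∈ Icc 1 3) {k j : ℤ} {d : ℕ} {l b : ℝ}
    (hd : S k ≤ d) (hl : 0 < l) (h : l ≤ cfBackward S j) (hb : d + 1 / l ≤ b)
    (hj : j = k - 1 := by omega) : cfBackward S k ≤ b := by
  subst hj
  rw [cfBackward_eq hS]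
  calc (S k : ℝ) + 1 / cfBackward S (k - 1) ≤ d + 1 / l := by gcongr
    _ ≤ b := hb

theorem le_cfBackward_of_le (hS : ∀ n, S n ∈ Icc 1 3) {k j : ℤ} {d : ℕ} {u b : ℝ}
    (hd : d ≤ S k) (h : cfBackward S j ≤ u) (hb : b ≤ d + 1 / u)
    (hj : j = k - 1 := by omega) : b ≤ cfBackward S k := by
  subst hj
  have := (cfBackward_mem_Icc hS (k - 1)).1
  rw [cfBackward_eq hS]
  calc b ≤ d + 1 / u := hb
    _ ≤ S k + 1 / cfBackward S (k - 1) := by gcongr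

theorem lambdaK_neg (hS : ∀ n, S n ∈ Icc 1 3) (k : ℤ) :
    lambdaK k (fun n => S (-n)) = lambdaK (-k) S := by
  rw [lambdaK_eq_cfForward_add, lambdaK_eq_cfForward_add, cfForward_neg, cfBackward_neg,
    cfBackward_eq hS (-k), cfForward_eq hS (-k), neg_sub', sub_neg_eq_add]
  ring

theorem lambdaK_le_five (hS : ∀ n, S n ∈ Icc 1 3) (k : ℤ) : lambdaK k S ≤ 5 := by
  obtain ⟨-, hX⟩ := cfForward_mem_Icc hS k
  obtain ⟨hY, -⟩ := cfBackward_mem_Icc hS (k - 1)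
  have : 1 / cfBackward S (k - 1) ≤ 1 := by rw [div_le_one (by linarith)]; exact hY
  rw [lambdaK_eq_cfForward_add]
  linarith

theorem lambdaK_le_markovValue (hS : ∀ n, S n ∈ Icc 1 3) (k : ℤ) :
    lambdaK k S ≤ markovValue S :=
  le_ciSup (f := fun j => lambdaK j S) ⟨5, by rintro _ ⟨j, rfl⟩; exact lambdaK_le_five hS j⟩ k

theorem le_lambdaK_of_le (hS : ∀ n, S n ∈ Icc 1 3) {k j : ℤ} {a b c : ℝ}
    (hX : a ≤ cfForward S k) (hY : cfBackward S j ≤ b) (hc : c ≤ a + 1 / b)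
    (hj : j = k - 1 := by omega) : c ≤ lambdaK k S := by
  subst hj
  have := (cfBackward_mem_Icc hS (k - 1)).1
  rw [lambdaK_eq_cfForward_add]
  calc c ≤ a + 1 / b := hc
    _ ≤ cfForward S k + 1 / cfBackward S (k - 1) := by gcongr

theorem P1_mem_Icc (n : ℤ) : P1 n ∈ Icc 1 3 := by
  simp only [P1, mem_Icc]
  split <;> omega

theorem lambda0_P1_add_lt : lambda0 P1 + 1 / 10 ^ 4 < 369 / 100 := by
  have hP := P1_mem_Icc
  have hX3 : 5 / 4 ≤ cfForward P1 3 :=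
    le_cfForward_of_le hP (by decide : 1 ≤ P1 3) (cfForward_mem_Icc hP 4).2 (by norm_num)
  have hX2 : cfForward P1 2 ≤ 9 / 5 :=
    cfForward_le_of_le hP (by decide : P1 2 ≤ 1) (by norm_num) hX3 (by norm_num)
  have hX1 : 23 / 9 ≤ cfForward P1 1 :=
    le_cfForward_of_le hP (by decide : 2 ≤ P1 1) hX2 (by norm_num)
  have hX0 : cfForward P1 0 ≤ 78 / 23 :=
    cfForward_le_of_le hP (by decide : P1 0 ≤ 3) (by norm_num) hX1 (by norm_num)
  have hY3 : 5 / 4 ≤ cfBackward P1 (-3) :=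
    le_cfBackward_of_le hP (by decide : 1 ≤ P1 (-3)) (cfBackward_mem_Icc hP (-4)).2 (by norm_num)
  have hY2 : cfBackward P1 (-2) ≤ 14 / 5 :=
    cfBackward_le_of_le hP (by decide : P1 (-2) ≤ 2) (by norm_num) hY3 (by norm_num)
  have hY1 : 47 / 14 ≤ cfBackward P1 (-1) :=
    le_cfBackward_of_le hP (by decide : 3 ≤ P1 (-1)) hY2 (by norm_num)
  have hlam : lambda0 P1 = cfForward P1 0 + 1 / cfBackward P1 (-1) := by
    simpa [lambdaK] using lambdaK_eq_cfForward_add P1 0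
  have : 1 / cfBackward P1 (-1) ≤ 14 / 47 := by
    rw [div_le_iff₀ (by linarith)]; linarith
  rw [hlam]
  linarith [show (1 : ℝ) / 10 ^ 4 = 1 / 10000 by norm_num]

theorem not_three_two_ge_two (hS : ∀ n, S n ∈ Icc 1 3) (hlt : ∀ k, lambdaK k S < 369 / 100)
    (n : ℤ) : ¬(S n = 3 ∧ S (n + 1) = 2 ∧ 2 ≤ S (n + 2)) := by
  rintro ⟨h₀, h₁, h₂⟩
  have hX2 : 9 / 4 ≤ cfForward S (n + 2) :=
    le_cfForward_of_le hS h₂ (cfForward_mem_Icc hS (n + 3)).2 (by norm_num)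
  have hX1 : cfForward S (n + 1) ≤ 22 / 9 :=
    cfForward_le_of_le hS h₁.le (by norm_num) hX2 (by norm_num)
  have hX0 : 75 / 22 ≤ cfForward S n :=
    le_cfForward_of_le hS h₀.ge hX1 (by norm_num)
  rcases (hS (n - 1)).2.lt_or_eq with hm₁ | hm₁
  · have hY1 : cfBackward S (n - 1) ≤ 3 :=
      cfBackward_le_of_le hS (Nat.le_of_lt_succ hm₁) one_pos (cfBackward_mem_Icc hS (n - 2)).1
        (by norm_num)
    exact (hlt n).not_ge (le_lambdaK_of_le hS hX0 hY1 (by norm_num))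
  rcases (hS (n - 2)).1.eq_or_lt with hm₂ | hm₂
  · have hY2 : cfBackward S (n - 2) ≤ 2 :=
      cfBackward_le_of_le hS hm₂.ge one_pos (cfBackward_mem_Icc hS (n - 3)).1 (by norm_num)
    have hXm₁ : 13 / 4 ≤ cfForward S (n - 1) :=
      le_cfForward_of_le hS hm₁.ge (cfForward_mem_Icc hS n).2 (by norm_num)
    exact (hlt (n - 1)).not_ge (le_lambdaK_of_le hS hXm₁ hY2 (by norm_num))
  · have hY2 : 9 / 4 ≤ cfBackward S (n - 2) :=
      le_cfBackward_of_le hS hm₂ (cfBackward_mem_Icc hS (n - 3)).2 (by norm_num)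
    have hY1 : cfBackward S (n - 1) ≤ 31 / 9 :=
      cfBackward_le_of_le hS hm₁.le (by norm_num) hY2 (by norm_num)
    exact (hlt n).not_ge (le_lambdaK_of_le hS hX0 hY1 (by norm_num))

end Digits

/-- If `m(S) ≤ j₀ + 10⁻⁴` then `S` contains none of the words `322`, `223`, `323`. -/
theorem forbidden_words_322_223_323 (S : ℤ → ℕ)
    (hS : ∀ n : ℤ, S n ∈ ({1, 2, 3} : Set ℕ))
    (hm : markovValue S ≤ lambda0 P1 + 1 / 10 ^ 4) :
    ∀ n : ℤ,
      ¬(S n = 3 ∧ S (n + 1) = 2 ∧ S (n + 2) = 2) ∧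
      ¬(S n = 2 ∧ S (n + 1) = 2 ∧ S (n + 2) = 3) ∧
      ¬(S n = 3 ∧ S (n + 1) = 2 ∧ S (n + 2) = 3) := by
  have hS' : ∀ n, S n ∈ Icc 1 3 := fun n => by
    have := hS n
    simp only [mem_insert_iff, mem_singleton_iff] at this
    simp only [mem_Icc]
    omega
  have hlt (k : ℤ) : lambdaK k S < 369 / 100 :=
    (lambdaK_le_markovValue hS' k).trans_lt (hm.trans_lt lambda0_P1_add_lt)
  have hlt_rev (k : ℤ) : lambdaK k (fun n => S (-n)) < 369 / 100 := by
    rw [lambdaK_neg hS']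
    exact hlt (-k)
  intro n
  refine ⟨fun ⟨h₀, h₁, h₂⟩ => not_three_two_ge_two hS' hlt n ⟨h₀, h₁, h₂.ge⟩, fun ⟨h₀, h₁, h₂⟩ => ?_,
    fun ⟨h₀, h₁, h₂⟩ => not_three_two_ge_two hS' hlt n ⟨h₀, h₁, by omega⟩⟩
  -- `223` read backwards is `322`
  refine not_three_two_ge_two (fun k => hS' (-k)) hlt_rev (-(n + 2)) ⟨?_, ?_, ?_⟩
  · simpa using h₂
  · convert h₁ using 2; ring
  · rw [show -(-(n + 2) + 2) = n by ring, h₀]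
end
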